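/- arXiv:2403.07521 — 5 statements merged into one kernel-verified Lean document; each statement's English description precedes it below -/
import Mathlib

section
/- Let (A, d_A) be a differential algebra of weight λ and (M, d_M) a differential bimodule over (A, d_A). Define new actions of A on M by a ▷ m = a·m + λ·(d_A(a))·m and m ◁ a = m·a + λ·m·(d_A(a)). Then M with these actions is again an A-bimodule; that is, for all a, b ∈ A and m ∈ M: (ab) ▷ m = a ▷ (b ▷ m), m ◁ (ab) = (m ◁ a) ◁ b, and (a ▷ m) ◁ b = a ▷ (m ◁ b), and both actions are bilinear. -/
/-- the shifted actions `a ▷ m = a·m + λ d_A(a)·m` and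
`m ◁ a = m·a + λ m·d_A(a)` make the differential bimodule `M` into an
`A`-bimodule again: the three bimodule axioms hold and both actions are
bilinear. -/
theorem shifted_actions_form_bimodule
    (F : Type*) [Field F] [CharZero F] (lam : F)
    (A : Type*) [Ring A] [Algebra F A]
    (M : Type*) [AddCommGroup M] [Module F M]
    -- differential algebra of weight lam
    (dA : A →ₗ[F] A)
    (hdA : ∀ u v : A, dA (u * v) = dA u * v + u * dA v + lam • (dA u * dA v))
    -- A-bimodule structure on M (bilinear actions)
    (l : A →ₗ[F] M →ₗ[F] M) (r : M →ₗ[F] A →ₗ[F] M)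
    (hl : ∀ (a b : A) (m : M), l (a * b) m = l a (l b m))
    (hr : ∀ (a b : A) (m : M), r m (a * b) = r (r m a) b)
    (hlr : ∀ (a b : A) (m : M), r (l a m) b = l a (r m b))
    -- differential bimodule structure
    (dM : M →ₗ[F] M)
    (hdMl : ∀ (a : A) (m : M),
      dM (l a m) = l (dA a) m + l a (dM m) + lam • l (dA a) (dM m))
    (hdMr : ∀ (a : A) (m : M),
      dM (r m a) = r m (dA a) + r (dM m) a + lam • r (dM m) (dA a)) :
    -- (ab) ▷ m = a ▷ (b ▷ m)
    (∀ (a b : A) (m : M),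
      l (a * b) m + lam • l (dA (a * b)) m
        = (l a (l b m + lam • l (dA b) m)
            + lam • l (dA a) (l b m + lam • l (dA b) m))) ∧
    -- m ◁ (ab) = (m ◁ a) ◁ b
    (∀ (a b : A) (m : M),
      r m (a * b) + lam • r m (dA (a * b))
        = (r (r m a + lam • r m (dA a)) b
            + lam • r (r m a + lam • r m (dA a)) (dA b))) ∧
    -- (a ▷ m) ◁ b = a ▷ (m ◁ b)
    (∀ (a b : A) (m : M),
      r (l a m + lam • l (dA a) m) b + lam • r (l a m + lam • l (dA a) m) (dA b)
        = (l a (r m b + lam • r m (dA b))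
            + lam • l (dA a) (r m b + lam • r m (dA b)))) ∧
    -- bilinearity of the left shifted action
    (∀ m : M, IsLinearMap F (fun a : A => l a m + lam • l (dA a) m)) ∧
    (∀ a : A, IsLinearMap F (fun m : M => l a m + lam • l (dA a) m)) ∧
    -- bilinearity of the right shifted action
    (∀ m : M, IsLinearMap F (fun a : A => r m a + lam • r m (dA a))) ∧
    (∀ a : A, IsLinearMap F (fun m : M => r m a + lam • r m (dA a))) := by
  refine ⟨?_, ?_, ?_, ?_, ?_, ?_, ?_⟩
  · intro a b m
    simp only [hdA, map_add, map_smul, LinearMap.add_apply, LinearMap.smul_apply,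
      hl, smul_add, smul_smul]
    abel
  · intro a b m
    simp only [hdA, map_add, map_smul, LinearMap.add_apply, LinearMap.smul_apply,
      hr, smul_add, smul_smul]
    abel
  · intro a b m
    simp only [map_add, map_smul, LinearMap.add_apply, LinearMap.smul_apply,
      hlr, smul_add, smul_smul]
    abel
  · intro m
    constructor
    · intro a b; simp only [map_add, LinearMap.add_apply, smul_add]; abel
    · intro c a; simp only [map_smul, LinearMap.smul_apply, smul_comm c lam, smul_add]
  · intro a
    constructor
    · intro m n; simp only [map_add, smul_add]; abel
    · intro c m; simp only [map_smul, smul_comm c lam, smul_add]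
  · intro m
    constructor
    · intro a b; simp only [map_add, LinearMap.add_apply, smul_add]; abel
    · intro c a; simp only [map_smul, LinearMap.smul_apply, smul_comm c lam, smul_add]
  · intro a
    constructor
    · intro m n; simp only [map_add, LinearMap.add_apply, smul_add]; abel
    · intro c m; simp only [map_smul, LinearMap.smul_apply, smul_comm c lam, smul_add]
end

section
/- Let (A, d_A) be a differential algebra of weight λ and (M, d_M) a differential bimodule over (A, d_A). With respect to the shifted actions a ▷ m = a·m + λ·(d_A(a))·m and m ◁ a = m·a + λ·m·(d_A(a)), the same map d_M satisfies the weight-λ differential bimodule identities: d_M(a ▷ m) = d_A(a) ▷ m + a ▷ d_M(m) + λ·(d_A(a) ▷ d_M(m)) and d_M(m ◁ a) = m ◁ d_A(a) + d_M(m) ◁ a + λ·(d_M(m) ◁ d_A(a)) for all a ∈ A, m ∈ M. -/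
/-- with respect to the shifted actions
`a ▷ m = a·m + λ d_A(a)·m` and `m ◁ a = m·a + λ m·d_A(a)`, the same map `d_M`
still satisfies the weight-λ differential bimodule identities. -/
theorem dM_differential_for_shifted_actions
    (F : Type*) [Field F] [CharZero F] (lam : F)
    (A : Type*) [Ring A] [Algebra F A]
    (M : Type*) [AddCommGroup M] [Module F M]
    -- differential algebra of weight lam
    (dA : A →ₗ[F] A)
    (hdA : ∀ u v : A, dA (u * v) = dA u * v + u * dA v + lam • (dA u * dA v))
    -- A-bimodule structure on M (bilinear actions)
    (l : A →ₗ[F] M →ₗ[F] M) (r : M →ₗ[F] A →ₗ[F] M)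
    (hl : ∀ (a b : A) (m : M), l (a * b) m = l a (l b m))
    (hr : ∀ (a b : A) (m : M), r m (a * b) = r (r m a) b)
    (hlr : ∀ (a b : A) (m : M), r (l a m) b = l a (r m b))
    -- differential bimodule structure
    (dM : M →ₗ[F] M)
    (hdMl : ∀ (a : A) (m : M),
      dM (l a m) = l (dA a) m + l a (dM m) + lam • l (dA a) (dM m))
    (hdMr : ∀ (a : A) (m : M),
      dM (r m a) = r m (dA a) + r (dM m) a + lam • r (dM m) (dA a)) :
    -- d_M(a ▷ m) = d_A(a) ▷ m + a ▷ d_M(m) + λ (d_A(a) ▷ d_M(m))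
    (∀ (a : A) (m : M),
      dM (l a m + lam • l (dA a) m)
        = (l (dA a) m + lam • l (dA (dA a)) m)
          + (l a (dM m) + lam • l (dA a) (dM m))
          + lam • (l (dA a) (dM m) + lam • l (dA (dA a)) (dM m))) ∧
    -- d_M(m ◁ a) = m ◁ d_A(a) + d_M(m) ◁ a + λ (d_M(m) ◁ d_A(a))
    (∀ (a : A) (m : M),
      dM (r m a + lam • r m (dA a))
        = (r m (dA a) + lam • r m (dA (dA a)))
          + (r (dM m) a + lam • r (dM m) (dA a))
          + lam • (r (dM m) (dA a) + lam • r (dM m) (dA (dA a)))) := by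
  constructor <;> intro a m <;>
    simp only [map_add, map_smul, hdMl, hdMr, smul_add] <;> abel
end

section
/- Let (A, d_A) and (B, d_B) be differential algebras of weight λ and let φ : A → B be a morphism of differential algebras (an algebra morphism with φ ∘ d_A = d_B ∘ φ). Define d_{φ!} on A × B × B by d_{φ!}(a, b₁, b₂) = (d_A(a), d_B(b₁), d_B(b₂)). Then d_{φ!} is a differential operator of weight λ with respect to the mapping-ring multiplication (a, b₁, b₂)(a', b₁', b₂') = (aa', b₁b₁', b₂φ(a') + b₁b₂'); that is, d_{φ!}(x·y) = d_{φ!}(x)·y + x·d_{φ!}(y) + λ d_{φ!}(x)·d_{φ!}(y) for all x, y ∈ A × B × B. -/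
/-- The multiplication of the mapping ring `φ! ≅ A × B × B`. -/
def mappingRingMul {A B : Type*} [Mul A] [Mul B] [Add B] (φ : A → B) :
    A × B × B → A × B × B → A × B × B :=
  fun x y => (x.1 * y.1, x.2.1 * y.2.1, x.2.2 * φ y.1 + x.2.1 * y.2.2)

/-- The componentwise operator `(a, b₁, b₂) ↦ (d_X(a), d_Y(b₁), d_Y(b₂))`. -/
def tripleMap {X Y : Type*} (dX : X → X) (dY : Y → Y) :
    X × Y × Y → X × Y × Y :=
  fun x => (dX x.1, dY x.2.1, dY x.2.2)

/-- for a morphism `φ : (A, d_A) → (B, d_B)` of differential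
algebras of weight λ, the operator `d_{φ!}(a, b₁, b₂) = (d_A a, d_B b₁, d_B b₂)`
is a differential operator of weight λ on the mapping ring `φ!`. -/
theorem mapping_ring_differential_operator
    (F : Type*) [Field F] [CharZero F] (lam : F)
    (A : Type*) [Ring A] [Algebra F A]
    (B : Type*) [Ring B] [Algebra F B]
    (dA : A →ₗ[F] A)
    (hdA : ∀ u v : A, dA (u * v) = dA u * v + u * dA v + lam • (dA u * dA v))
    (dB : B →ₗ[F] B)
    (hdB : ∀ u v : B, dB (u * v) = dB u * v + u * dB v + lam • (dB u * dB v))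
    (φ : A →ₐ[F] B)
    (hφd : ∀ a : A, φ (dA a) = dB (φ a)) :
    ∀ x y : A × B × B,
      tripleMap (⇑dA) (⇑dB) (mappingRingMul (⇑φ) x y)
        = mappingRingMul (⇑φ) (tripleMap (⇑dA) (⇑dB) x) y
          + mappingRingMul (⇑φ) x (tripleMap (⇑dA) (⇑dB) y)
          + lam • mappingRingMul (⇑φ) (tripleMap (⇑dA) (⇑dB) x)
              (tripleMap (⇑dA) (⇑dB) y) := by
  intro x y
  simp only [tripleMap, mappingRingMul, map_add, hdB, hφd, Prod.mk_add_mk, Prod.smul_mk, smul_add, Prod.mk.injEq]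
  exact ⟨hdA _ _, trivial, by abel⟩
end

section
/- Let φ : (A, d_A) → (B, d_B) be a morphism of differential algebras of weight λ and ⟨M, N, ψ⟩ a differential φ-bimodule. Define d_{ψ!}(m, n₁, n₂) = (d_M(m), d_N(n₁), d_N(n₂)) on M × N × N and d_{φ!}(a, b₁, b₂) = (d_A(a), d_B(b₁), d_B(b₂)) on A × B × B. Then with respect to the φ!-bimodule actions (a, b₁, b₂)·(m, n₁, n₂) = (a·m, b₁·n₁, b₂·ψ(m) + b₁·n₂) and (m, n₁, n₂)·(a, b₁, b₂) = (m·a, n₁·b₁, n₂·φ(a) + n₁·b₂), the map d_{ψ!} satisfies the weight-λ differential bimodule identities: d_{ψ!}(x·ξ) = d_{φ!}(x)·ξ + x·d_{ψ!}(ξ) + λ d_{φ!}(x)·d_{ψ!}(ξ) and d_{ψ!}(ξ·x) = ξ·d_{φ!}(x) + d_{ψ!}(ξ)·x + λ d_{ψ!}(ξ)·d_{φ!}(x) for all x ∈ A × B × B and ξ ∈ M × N × N. -/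
/-- Left action of `φ! = A × B × B` on `ψ! = M × N × N`. -/
def psiBangLeft {A B M N : Type*} [Add N]
    (ψ : M → N) (lA : A → M → M) (lB : B → N → N) :
    A × B × B → M × N × N → M × N × N :=
  fun x ξ => (lA x.1 ξ.1, lB x.2.1 ξ.2.1, lB x.2.2 (ψ ξ.1) + lB x.2.1 ξ.2.2)

/-- Right action of `φ! = A × B × B` on `ψ! = M × N × N`. -/
def psiBangRight {A B M N : Type*} [Add N]
    (φ : A → B) (rA : M → A → M) (rB : N → B → N) :
    M × N × N → A × B × B → M × N × N :=
  fun ξ x => (rA ξ.1 x.1, rB ξ.2.1 x.2.1, rB ξ.2.2 (φ x.1) + rB ξ.2.1 x.2.2)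

/-- for a morphism `φ : (A, d_A) → (B, d_B)` of differential
algebras of weight λ and a differential `φ`-bimodule `⟨M, N, ψ⟩`, the operator
`d_{ψ!}(m, n₁, n₂) = (d_M m, d_N n₁, d_N n₂)` satisfies the weight-λ
differential bimodule identities over `(φ!, d_{φ!})`. -/
theorem psiBang_is_differential_bimodule
    (F : Type*) [Field F] [CharZero F] (lam : F)
    (A : Type*) [Ring A] [Algebra F A]
    (B : Type*) [Ring B] [Algebra F B]
    (M : Type*) [AddCommGroup M] [Module F M]
    (N : Type*) [AddCommGroup N] [Module F N]
    -- differential algebras of weight lam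
    (dA : A →ₗ[F] A)
    (hdA : ∀ u v : A, dA (u * v) = dA u * v + u * dA v + lam • (dA u * dA v))
    (dB : B →ₗ[F] B)
    (hdB : ∀ u v : B, dB (u * v) = dB u * v + u * dB v + lam • (dB u * dB v))
    -- morphism of differential algebras
    (φ : A →ₐ[F] B)
    (hφd : ∀ a : A, φ (dA a) = dB (φ a))
    -- A-bimodule structure on M
    (lA : A →ₗ[F] M →ₗ[F] M) (rA : M →ₗ[F] A →ₗ[F] M)
    (hlA : ∀ (a b : A) (m : M), lA (a * b) m = lA a (lA b m))
    (hrA : ∀ (a b : A) (m : M), rA m (a * b) = rA (rA m a) b)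
    (hlrA : ∀ (a b : A) (m : M), rA (lA a m) b = lA a (rA m b))
    -- B-bimodule structure on N
    (lB : B →ₗ[F] N →ₗ[F] N) (rB : N →ₗ[F] B →ₗ[F] N)
    (hlB : ∀ (b c : B) (n : N), lB (b * c) n = lB b (lB c n))
    (hrB : ∀ (b c : B) (n : N), rB n (b * c) = rB (rB n b) c)
    (hlrB : ∀ (b c : B) (n : N), rB (lB b n) c = lB b (rB n c))
    -- differential bimodule structures
    (dM : M →ₗ[F] M)
    (hdMl : ∀ (a : A) (m : M),
      dM (lA a m) = lA (dA a) m + lA a (dM m) + lam • lA (dA a) (dM m))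
    (hdMr : ∀ (a : A) (m : M),
      dM (rA m a) = rA m (dA a) + rA (dM m) a + lam • rA (dM m) (dA a))
    (dN : N →ₗ[F] N)
    (hdNl : ∀ (b : B) (n : N),
      dN (lB b n) = lB (dB b) n + lB b (dN n) + lam • lB (dB b) (dN n))
    (hdNr : ∀ (b : B) (n : N),
      dN (rB n b) = rB n (dB b) + rB (dN n) b + lam • rB (dN n) (dB b))
    -- ψ : morphism of differential (A, d_A)-bimodules (N via φ)
    (ψ : M →ₗ[F] N)
    (hψl : ∀ (a : A) (m : M), ψ (lA a m) = lB (φ a) (ψ m))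
    (hψr : ∀ (a : A) (m : M), ψ (rA m a) = rB (ψ m) (φ a))
    (hψd : ∀ m : M, dN (ψ m) = ψ (dM m)) :
    -- d_{ψ!}(x·ξ) = d_{φ!}(x)·ξ + x·d_{ψ!}(ξ) + λ d_{φ!}(x)·d_{ψ!}(ξ)
    (∀ (x : A × B × B) (ξ : M × N × N),
      tripleMap (⇑dM) (⇑dN)
          (psiBangLeft (⇑ψ) (fun a m => lA a m) (fun b n => lB b n) x ξ)
        = psiBangLeft (⇑ψ) (fun a m => lA a m) (fun b n => lB b n)
            (tripleMap (⇑dA) (⇑dB) x) ξ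
          + psiBangLeft (⇑ψ) (fun a m => lA a m) (fun b n => lB b n) x
              (tripleMap (⇑dM) (⇑dN) ξ)
          + lam • psiBangLeft (⇑ψ) (fun a m => lA a m) (fun b n => lB b n)
              (tripleMap (⇑dA) (⇑dB) x) (tripleMap (⇑dM) (⇑dN) ξ)) ∧
    -- d_{ψ!}(ξ·x) = ξ·d_{φ!}(x) + d_{ψ!}(ξ)·x + λ d_{ψ!}(ξ)·d_{φ!}(x)
    (∀ (x : A × B × B) (ξ : M × N × N),
      tripleMap (⇑dM) (⇑dN)
          (psiBangRight (⇑φ) (fun m a => rA m a) (fun n b => rB n b) ξ x)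
        = psiBangRight (⇑φ) (fun m a => rA m a) (fun n b => rB n b) ξ
            (tripleMap (⇑dA) (⇑dB) x)
          + psiBangRight (⇑φ) (fun m a => rA m a) (fun n b => rB n b)
              (tripleMap (⇑dM) (⇑dN) ξ) x
          + lam • psiBangRight (⇑φ) (fun m a => rA m a) (fun n b => rB n b)
              (tripleMap (⇑dM) (⇑dN) ξ) (tripleMap (⇑dA) (⇑dB) x)) := by
  constructor
  · rintro ⟨a, b1, b2⟩ ⟨m, n1, n2⟩
    simp only [psiBangLeft, tripleMap, Prod.mk_add_mk, Prod.smul_mk, Prod.mk.injEq]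
    refine ⟨hdMl a m, hdNl b1 n1, ?_⟩
    simp only [map_add, hdNl, hψd, smul_add]
    abel
  · rintro ⟨a, b1, b2⟩ ⟨m, n1, n2⟩
    simp only [psiBangRight, tripleMap, Prod.mk_add_mk, Prod.smul_mk, Prod.mk.injEq]
    refine ⟨hdMr a m, hdNr b1 n1, ?_⟩
    simp only [map_add, hdNr, hφd, smul_add]
    abel
end

section
/- Let (A, d) be a differential algebra of weight λ, μ₁ : A × A → A bilinear and d₁ : A → A linear. Equip A × A with the first-order deformed multiplication (a₀, a₁)·(b₀, b₁) = (a₀b₀, a₀b₁ + a₁b₀ + μ₁(a₀, b₀)) and define D(a₀, a₁) = (d(a₀), d(a₁) + d₁(a₀)). Then D is a differential operator of weight λ for the deformed multiplication (D(x·y) = D(x)·y + x·D(y) + λ D(x)·D(y) for all x, y ∈ A × A) if and only if for all a, b ∈ A: d₁(ab) + d(μ₁(a, b)) = μ₁(d(a), b) + μ₁(a, d(b)) + λ μ₁(d(a), d(b)) + d₁(a)·b + a·d₁(b) + λ(d₁(a)·d(b) + d(a)·d₁(b)). -/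
/-- First-order deformation of the multiplication of `A` along a bilinear map
`μ₁`, on `A × A ≅ A ⊗ F[t]/(t²)`. -/
def defMul {A : Type*} [Mul A] [Add A] (μ₁ : A → A → A) :
    A × A → A × A → A × A :=
  fun x y => (x.1 * y.1, x.1 * y.2 + x.2 * y.1 + μ₁ x.1 y.1)

/-- First-order extension of a map `f : A → B` along an infinitesimal `g`:
`(a₀, a₁) ↦ (f(a₀), f(a₁) + g(a₀))`. -/
def fstOrd {A B : Type*} [Add B] (f g : A → B) : A × A → B × B :=
  fun x => (f x.1, f x.2 + g x.1)

/-- `D(a₀, a₁) = (d(a₀), d(a₁) + d₁(a₀))` is a differential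
operator of weight λ for the deformed multiplication if and only if the
displayed first-order compatibility equation holds. -/
theorem first_order_differential_operator_iff
    (F : Type*) [Field F] [CharZero F] (lam : F)
    (A : Type*) [Ring A] [Algebra F A]
    (d : A →ₗ[F] A)
    (hd : ∀ u v : A, d (u * v) = d u * v + u * d v + lam • (d u * d v))
    (μ₁ : A →ₗ[F] A →ₗ[F] A)
    (d₁ : A →ₗ[F] A) :
    (∀ x y : A × A,
      fstOrd (⇑d) (⇑d₁) (defMul (fun a b => μ₁ a b) x y)
        = defMul (fun a b => μ₁ a b) (fstOrd (⇑d) (⇑d₁) x) y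
          + defMul (fun a b => μ₁ a b) x (fstOrd (⇑d) (⇑d₁) y)
          + lam • defMul (fun a b => μ₁ a b)
              (fstOrd (⇑d) (⇑d₁) x) (fstOrd (⇑d) (⇑d₁) y))
    ↔ (∀ a b : A,
        d₁ (a * b) + d (μ₁ a b)
          = μ₁ (d a) b + μ₁ a (d b) + lam • μ₁ (d a) (d b)
            + d₁ a * b + a * d₁ b + lam • (d₁ a * d b + d a * d₁ b)) := by
  constructor
  · intro h a b
    have := congrArg Prod.snd (h (a, 0) (b, 0))
    simp only [defMul, fstOrd, Prod.snd_add, Prod.smul_def, smul_eq_mul,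
      map_zero, map_add, map_mul, mul_zero, zero_mul,
      add_zero, zero_add, LinearMap.zero_apply, LinearMap.map_zero] at this
    linear_combination (norm := module) this
  · intro h x y
    obtain ⟨a₀, a₁⟩ := x
    obtain ⟨b₀, b₁⟩ := y
    have h1 := hd a₀ b₀
    have h2 := hd a₀ b₁
    have h3 := hd a₁ b₀
    have h4 := h a₀ b₀
    ext
    · simp only [defMul, fstOrd, Prod.fst_add, Prod.smul_def, smul_eq_mul]
      linear_combination (norm := module) h1
    · simp only [defMul, fstOrd, Prod.snd_add, Prod.smul_def, smul_eq_mul,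
        map_add, mul_add, add_mul, smul_add]
      linear_combination (norm := module) h2 + h3 + h4
end
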